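/- arXiv:1905.12777 — 5 statements merged into one kernel-verified Lean document; each statement's English description precedes it below -/
import Mathlib

section
/- Fix n ≥ 1, d ≥ 1, L > 0, and latent points z : Fin n → ℝ^d. Then for any two permutations α and β of Fin n, the optimal values of the AAE reconstruction objective under the two encoder matchings coincide: sSup { (1/n) · ∑_{i} f i (α i) : f ∈ 𝒢_L } = sSup { (1/n) · ∑_{i} f i (β i) : f ∈ 𝒢_L }. (In particular, the optimal AAE objective is the same for every one-to-one matching of the data points x_1,…,x_n to the latent points z_1,…,z_n.) -/
open Real Finset

/-- The decoder class `𝒢_L`: log-likelihood tables `f i j = log p_G(x_i | z_j)` such that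
(i) each column is a log sub-probability vector, and
(ii) the log-likelihood is `L`-Lipschitz in the latent variable. -/
def decoderClass {n d : ℕ} (L : ℝ) (z : Fin n → EuclideanSpace ℝ (Fin d)) :
    Set (Fin n → Fin n → ℝ) :=
  {f | (∀ j, ∑ i, Real.exp (f i j) ≤ 1) ∧
       ∀ i j k, |f i j - f i k| ≤ L * ‖z j - z k‖}

lemma aux_subset {n d : ℕ} (L : ℝ) (z : Fin n → EuclideanSpace ℝ (Fin d))
    (α β : Equiv.Perm (Fin n)) :
    {y : ℝ | ∃ f ∈ decoderClass L z, y = (1 / (n : ℝ)) * ∑ i, f i (α i)} ⊆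
    {y : ℝ | ∃ f ∈ decoderClass L z, y = (1 / (n : ℝ)) * ∑ i, f i (β i)} := by
  rintro y ⟨f, ⟨h1, h2⟩, rfl⟩
  refine ⟨fun i j => f ((α⁻¹ * β) i) j, ⟨fun j => ?_, fun i j k => h2 ((α⁻¹ * β) i) j k⟩, ?_⟩
  · simpa using (Equiv.sum_comp (α⁻¹ * β) (fun i => Real.exp (f i j))).le.trans (h1 j)
  · congr 1
    rw [← Equiv.sum_comp (α⁻¹ * β) (fun i => f i (α i))]
    apply Finset.sum_congr rfl
    intro i _
    congr 1
    simp

/-- For any two one-to-one encoder matchings (permutations `α`, `β`) of the data points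
`x_1, …, x_n` to the latent points `z_1, …, z_n`, the optimal value of the AAE
reconstruction objective is the same. -/
theorem stmt0 (n d : ℕ) (hn : 1 ≤ n) (hd : 1 ≤ d) (L : ℝ) (hL : 0 < L)
    (z : Fin n → EuclideanSpace ℝ (Fin d)) (α β : Equiv.Perm (Fin n)) :
    sSup {y : ℝ | ∃ f ∈ decoderClass L z, y = (1 / (n : ℝ)) * ∑ i, f i (α i)} =
      sSup {y : ℝ | ∃ f ∈ decoderClass L z, y = (1 / (n : ℝ)) * ∑ i, f i (β i)} := by
  rw [Set.Subset.antisymm (aux_subset L z α β) (aux_subset L z β α)]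
end

section
/- Let n = 4 with index pairs A = {1,2} and B = {3,4}, and let z_1, z_2, z_3, z_4 ∈ ℝ^d satisfy, for some 0 < δ < ζ: ‖z_1 − z_2‖ < δ, ‖z_3 − z_4‖ < δ, and ‖z_i − z_j‖ > ζ for all other pairs (i,j) with i ≠ j. Let L > 0 and assume ζ > (1/L)·log(1/(√2 − 1)) and δ < (1/L)·(2·log σ(Lζ) + log 2), where σ(t) = 1/(1 + exp(−t)) is the sigmoid function. For a bijection π of {1,2,3,4} (representing the encoder matching x_i ↦ z_{π(i)}), define V(π) = sSup { ∑_{i∈A} ∑_{j∈A} f i (π j) + ∑_{k∈B} ∑_{ℓ∈B} f k (π ℓ) : f ∈ 𝒢_L }, which is the optimal denoising reconstruction objective (up to the positive constant factor 1/8) when the perturbation process C exchanges x_1 ↔ x_2 and x_3 ↔ x_4 each with probability 1/2. Then the denoising objective achieves its largest value at pair-preserving matchings: for every bijection π with {π(1), π(2)} = {1,2} or {π(1), π(2)} = {3,4}, and every bijection π′, one has V(π′) ≤ V(π). -/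
open Real Finset

/-- The sigmoid function. -/
noncomputable def sigmoid (t : ℝ) : ℝ := 1 / (1 + Real.exp (-t))

/-- The optimal denoising reconstruction objective (up to the factor 1/8) for the encoder
matching `x_i ↦ z_{π i}`, where the pairs are `A = {0,1}` and `B = {2,3}`. -/
noncomputable def V {d : ℕ} (L : ℝ) (z : Fin 4 → EuclideanSpace ℝ (Fin d))
    (e : Equiv.Perm (Fin 4)) : ℝ :=
  sSup {y : ℝ | ∃ f ∈ decoderClass L z, y =
    (∑ i ∈ ({0, 1} : Finset (Fin 4)), ∑ j ∈ ({0, 1} : Finset (Fin 4)), f i (e j)) +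
    (∑ k ∈ ({2, 3} : Finset (Fin 4)), ∑ l ∈ ({2, 3} : Finset (Fin 4)), f k (e l))}

/-!
Up to swapping the two row pairs, which preserves `𝒢_L`, every pair-preserving matching has the
same objective, and the decoder that spreads each column over its own pair, with cross-pair
log-likelihoods lowered by `Lζ`, attains `8 log (σ(Lζ)/2)`. A matching that is not
pair-preserving makes rows `0, 1` read one column `j` of each pair, while rows `2, 3` read their
partners `k`. Partners are `δ`-close, so by Lipschitz continuity column `k` must spend on rows
`0, 1` nearly what column `j` does, and AM-GM bounds each such group by `2Lδ - 8 log 2`. The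
hypothesis on `δ` makes the total `4Lδ - 16 log 2` smaller than `8 log (σ(Lζ)/2)`.
-/

section DecoderClass

variable {n d : ℕ} {L : ℝ} {z : Fin n → EuclideanSpace ℝ (Fin d)}
  {f : Fin n → Fin n → ℝ}

lemma nonpos_of_mem_decoderClass (hf : f ∈ decoderClass L z) (i j : Fin n) : f i j ≤ 0 :=
  exp_le_one_iff.mp <| (single_le_sum (f := fun k => exp (f k j))
    (fun _ _ => (exp_pos _).le) (mem_univ i)).trans (hf.1 j)

lemma sub_le_of_mem_decoderClass (hf : f ∈ decoderClass L z) (i j k : Fin n) :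
    f i j - L * ‖z j - z k‖ ≤ f i k := by
  linarith [(abs_le.mp (hf.2 i j k)).2]

lemma comp_perm_mem_decoderClass (hf : f ∈ decoderClass L z) (σ : Equiv.Perm (Fin n)) :
    (fun i j => f (σ i) j) ∈ decoderClass L z :=
  ⟨fun j => (Equiv.sum_comp σ (fun i => exp (f i j))).le.trans (hf.1 j),
    fun i => hf.2 (σ i)⟩

end DecoderClass

lemma sigmoid_eq_real_sigmoid (t : ℝ) : _root_.sigmoid t = Real.sigmoid t := by
  rw [_root_.sigmoid, Real.sigmoid_def, one_div]

lemma mul_mul_le_of_add_le_one_sub {a b c d t : ℝ} (ha : 0 < a) (hb : 0 < b) (hc : 0 < c)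
    (hd : 0 < d) (ht : 0 < t) (h : c + d ≤ 1 - t * (a + b)) :
    a * b * (c * d) ≤ 1 / (16 * t) ^ 2 := by
  have hab : a * b ≤ (a + b) ^ 2 / 4 := by nlinarith [sq_nonneg (a - b)]
  have hcd : c * d ≤ (c + d) ^ 2 / 4 := by nlinarith [sq_nonneg (c - d)]
  have hprod : (a + b) * (c + d) ≤ 1 / (4 * t) := by
    rw [le_div_iff₀ (by positivity)]
    nlinarith [sq_nonneg (2 * t * (a + b) - 1),
      mul_le_mul_of_nonneg_left h (by positivity : 0 ≤ a + b)]
  calc a * b * (c * d) ≤ (a + b) ^ 2 / 4 * ((c + d) ^ 2 / 4) := by gcongr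
    _ = ((a + b) * (c + d)) ^ 2 / 16 := by ring
    _ ≤ (1 / (4 * t)) ^ 2 / 16 := by gcongr
    _ = 1 / (16 * t) ^ 2 := by field_simp; ring

lemma add_add_add_le_of_exp_add_le {p q u v s : ℝ}
    (h : exp u + exp v ≤ 1 - exp (-s) * (exp p + exp q)) :
    p + q + u + v ≤ 2 * s - 8 * log 2 := by
  have hprod := mul_mul_le_of_add_le_one_sub (exp_pos p) (exp_pos q) (exp_pos u)
    (exp_pos v) (exp_pos (-s)) h
  have h16 : log 16 = 4 * log 2 := by
    rw [show (16 : ℝ) = 2 ^ 4 by norm_num, log_pow]; norm_num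
  calc p + q + u + v = log (exp p * exp q * (exp u * exp v)) := by
        simp only [← exp_add, log_exp]; ring
    _ ≤ log (1 / (16 * exp (-s)) ^ 2) := log_le_log (by positivity) hprod
    _ = 2 * s - 8 * log 2 := by
        rw [one_div, log_inv, log_pow, log_mul (by norm_num) (exp_pos _).ne',
          log_exp, h16]
        push_cast; ring

namespace FourPoint

variable {d : ℕ} {L : ℝ} {z : Fin 4 → EuclideanSpace ℝ (Fin d)}
  {f : Fin 4 → Fin 4 → ℝ}

def IsPair (x y : Fin 4) : Prop :=
  ({x, y} : Finset (Fin 4)) = {0, 1} ∨ ({x, y} : Finset (Fin 4)) = {2, 3}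

instance (x y : Fin 4) : Decidable (IsPair x y) := by unfold IsPair; infer_instance

lemma isPair_iff {x y : Fin 4} :
    IsPair x y ↔ x = 0 ∧ y = 1 ∨ x = 1 ∧ y = 0 ∨ x = 2 ∧ y = 3 ∨ x = 3 ∧ y = 2 := by
  revert x y; decide

lemma norm_sub_lt_of_isPair {δ : ℝ} (h01 : ‖z 0 - z 1‖ < δ) (h23 : ‖z 2 - z 3‖ < δ)
    {x y : Fin 4} (h : IsPair x y) : ‖z x - z y‖ < δ := by
  rcases isPair_iff.mp h with ⟨rfl, rfl⟩ | ⟨rfl, rfl⟩ | ⟨rfl, rfl⟩ | ⟨rfl, rfl⟩ <;>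
    simpa only [norm_sub_rev] using by assumption

lemma pair_compl (e : Equiv.Perm (Fin 4)) : ({e 2, e 3} : Finset (Fin 4)) = {e 0, e 1}ᶜ := by
  revert e; decide

lemma isPair_or_isPair_of_not_isPair {e : Equiv.Perm (Fin 4)} (h : ¬IsPair (e 0) (e 1)) :
    IsPair (e 0) (e 2) ∧ IsPair (e 1) (e 3) ∨ IsPair (e 0) (e 3) ∧ IsPair (e 1) (e 2) := by
  revert e; decide

def objective (f : Fin 4 → Fin 4 → ℝ) (e : Equiv.Perm (Fin 4)) : ℝ :=
  (∑ i ∈ ({0, 1} : Finset (Fin 4)), ∑ j ∈ ({0, 1} : Finset (Fin 4)), f i (e j)) +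
    (∑ k ∈ ({2, 3} : Finset (Fin 4)), ∑ l ∈ ({2, 3} : Finset (Fin 4)), f k (e l))

lemma bddAbove_objective (e : Equiv.Perm (Fin 4)) :
    BddAbove {y | ∃ f ∈ decoderClass L z, y = objective f e} := by
  refine ⟨0, ?_⟩
  rintro _ ⟨f, hf, rfl⟩
  have := nonpos_of_mem_decoderClass hf
  exact add_nonpos (sum_nonpos fun _ _ => sum_nonpos fun _ _ => this _ _)
    (sum_nonpos fun _ _ => sum_nonpos fun _ _ => this _ _)

lemma objective_le_V (hf : f ∈ decoderClass L z) (e : Equiv.Perm (Fin 4)) :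
    objective f e ≤ V L z e :=
  le_csSup (bddAbove_objective e) ⟨f, hf, rfl⟩

lemma V_le {e : Equiv.Perm (Fin 4)} {b : ℝ} (hne : (decoderClass L z).Nonempty)
    (h : ∀ f ∈ decoderClass L z, objective f e ≤ b) : V L z e ≤ b := by
  obtain ⟨f, hf⟩ := hne
  refine csSup_le ⟨_, f, hf, rfl⟩ ?_
  rintro _ ⟨g, hg, rfl⟩
  exact h g hg

def blockSum (f : Fin 4 → Fin 4 → ℝ) (P : Finset (Fin 4)) : ℝ :=
  ∑ i ∈ ({0, 1} : Finset (Fin 4)), ∑ j ∈ P, f i j +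
    ∑ k ∈ ({2, 3} : Finset (Fin 4)), ∑ l ∈ Pᶜ, f k l

lemma objective_eq_blockSum (f : Fin 4 → Fin 4 → ℝ) (e : Equiv.Perm (Fin 4)) :
    objective f e = blockSum f {e 0, e 1} := by
  have h01 : e 0 ≠ e 1 := e.injective.ne (by decide)
  have h23 : e 2 ≠ e 3 := e.injective.ne (by decide)
  simp only [objective, blockSum, ← pair_compl, sum_pair h01, sum_pair h23,
    sum_pair (show (0 : Fin 4) ≠ 1 by decide), sum_pair (show (2 : Fin 4) ≠ 3 by decide)]

lemma blockSum_rowShift (f : Fin 4 → Fin 4 → ℝ) (P : Finset (Fin 4)) :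
    blockSum (fun i j => f (i + 2) j) P = blockSum f Pᶜ := by
  simp only [blockSum, compl_compl, sum_pair (show (0 : Fin 4) ≠ 1 by decide),
    sum_pair (show (2 : Fin 4) ≠ 3 by decide), Fin.reduceAdd]
  ring

lemma exists_objective_eq_of_isPair {e e' : Equiv.Perm (Fin 4)} (he : IsPair (e 0) (e 1))
    (he' : IsPair (e' 0) (e' 1)) (hf : f ∈ decoderClass L z) :
    ∃ g ∈ decoderClass L z, objective g e = objective f e' := by
  have hcompl : ({0, 1} : Finset (Fin 4))ᶜ = {2, 3} := by decide
  have hP : ({e' 0, e' 1} : Finset (Fin 4)) = {e 0, e 1} ∨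
      ({e' 0, e' 1} : Finset (Fin 4)) = {e 0, e 1}ᶜ := by
    rcases he with h | h <;> rcases he' with h' | h' <;> simp [h, h', ← hcompl]
  simp only [objective_eq_blockSum]
  rcases hP with hP | hP
  · exact ⟨f, hf, by rw [hP]⟩
  · exact ⟨_, comp_perm_mem_decoderClass hf (Equiv.addRight 2), by
      rw [hP, ← blockSum_rowShift]; rfl⟩

/- Lipschitz continuity makes column `k` give rows `0, 1` at least `exp (-L‖z j - z k‖)` times
their mass in column `j`, which leaves correspondingly less for rows `2, 3`. -/
lemma add_add_add_le_of_mem_decoderClass (hf : f ∈ decoderClass L z) (j k : Fin 4) :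
    f 0 j + f 1 j + f 2 k + f 3 k ≤ 2 * (L * ‖z j - z k‖) - 8 * log 2 := by
  apply add_add_add_le_of_exp_add_le
  have hcol := hf.1 k
  rw [Fin.sum_univ_four] at hcol
  have hshift : ∀ i, exp (-(L * ‖z j - z k‖)) * exp (f i j) ≤ exp (f i k) := fun i => by
    rw [← exp_add, exp_le_exp]
    linarith [sub_le_of_mem_decoderClass hf i j k]
  linarith [hshift 0, hshift 1]

lemma objective_le_of_not_isPair {δ : ℝ} (hL : 0 ≤ L) (h01 : ‖z 0 - z 1‖ < δ)
    (h23 : ‖z 2 - z 3‖ < δ) (hf : f ∈ decoderClass L z) {e : Equiv.Perm (Fin 4)}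
    (he : ¬IsPair (e 0) (e 1)) : objective f e ≤ 4 * (L * δ) - 16 * log 2 := by
  have hclose : ∀ {x y}, IsPair x y → L * ‖z x - z y‖ ≤ L * δ := fun h =>
    mul_le_mul_of_nonneg_left (norm_sub_lt_of_isPair h01 h23 h).le hL
  have hexp : objective f e = f 0 (e 0) + f 0 (e 1) + f 1 (e 0) + f 1 (e 1) +
      (f 2 (e 2) + f 2 (e 3) + f 3 (e 2) + f 3 (e 3)) := by
    simp only [objective, sum_pair (show (0 : Fin 4) ≠ 1 by decide),
      sum_pair (show (2 : Fin 4) ≠ 3 by decide)]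
    ring
  rw [hexp]
  rcases isPair_or_isPair_of_not_isPair he with ⟨h02, h13⟩ | ⟨h03, h12⟩
  · linarith [add_add_add_le_of_mem_decoderClass hf (e 0) (e 2),
      add_add_add_le_of_mem_decoderClass hf (e 1) (e 3), hclose h02, hclose h13]
  · linarith [add_add_add_le_of_mem_decoderClass hf (e 0) (e 3),
      add_add_add_le_of_mem_decoderClass hf (e 1) (e 2), hclose h03, hclose h12]

lemma ne_and_not_isPair_of_not_iff {j k : Fin 4} (h : ¬((j : ℕ) < 2 ↔ (k : ℕ) < 2)) :
    j ≠ k ∧ ¬IsPair j k := by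
  revert j k; decide

/- Each column gives mass `σ(s)/2` to the two rows of its own pair and `σ(s) e^{-s}/2` to the
other two; since `σ(s) (1 + e^{-s}) = 1`, every column is a probability vector. -/
noncomputable def blockDecoder (s : ℝ) (i j : Fin 4) : ℝ :=
  log (Real.sigmoid s / 2) - if ((i : ℕ) < 2 ↔ (j : ℕ) < 2) then 0 else s

lemma blockDecoder_mem {s : ℝ} (hL : 0 ≤ L) (hs : 0 ≤ s)
    (hfar : ∀ j k, j ≠ k → ¬IsPair j k → s ≤ L * ‖z j - z k‖) :
    blockDecoder s ∈ decoderClass L z := by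
  have hσ : 0 < Real.sigmoid s / 2 := by have := Real.sigmoid_pos s; positivity
  constructor
  · intro j
    have hexp : ∀ i, exp (blockDecoder s i j) =
        Real.sigmoid s / 2 * if ((i : ℕ) < 2 ↔ (j : ℕ) < 2) then 1 else exp (-s) := by
      intro i
      rw [blockDecoder, exp_sub, exp_log hσ]
      split_ifs <;> simp [exp_neg, div_eq_mul_inv]
    have hmass : Real.sigmoid s + Real.sigmoid s * exp (-s) = 1 := by
      rw [Real.sigmoid_mul_rexp_neg, Real.sigmoid_neg]; ring
    simp only [hexp, Fin.sum_univ_four]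
    fin_cases j <;> norm_num <;> linarith
  · intro i j k
    by_cases hjk : ((j : ℕ) < 2 ↔ (k : ℕ) < 2)
    · simp only [blockDecoder, hjk, sub_self, abs_zero]
      positivity
    · have hdiff : |blockDecoder s i j - blockDecoder s i k| = s := by
        unfold blockDecoder
        split_ifs <;> simp [abs_of_nonneg hs] <;> tauto
      obtain ⟨hne, hnp⟩ := ne_and_not_isPair_of_not_iff hjk
      rw [hdiff]
      exact hfar j k hne hnp

lemma objective_blockDecoder_one (s : ℝ) :
    objective (blockDecoder s) 1 = 8 * log (Real.sigmoid s / 2) := by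
  simp only [objective, Equiv.Perm.one_apply, sum_pair (show (0 : Fin 4) ≠ 1 by decide),
    sum_pair (show (2 : Fin 4) ≠ 3 by decide), blockDecoder]
  norm_num
  ring

end FourPoint

open FourPoint in
theorem stmt1_general {d : ℕ} (L δ ζ : ℝ) (hL : 0 < L) (hδ : 0 < δ) (hδζ : δ < ζ)
    (z : Fin 4 → EuclideanSpace ℝ (Fin d))
    (h01 : ‖z 0 - z 1‖ < δ) (h23 : ‖z 2 - z 3‖ < δ)
    (hfar : ∀ i j : Fin 4, i ≠ j → ({i, j} : Finset (Fin 4)) ≠ {0, 1} →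
      ({i, j} : Finset (Fin 4)) ≠ {2, 3} → ζ < ‖z i - z j‖)
    (hδ' : δ < 1 / L * (2 * Real.log (_root_.sigmoid (L * ζ)) + Real.log 2))
    (e : Equiv.Perm (Fin 4))
    (he : ({e 0, e 1} : Finset (Fin 4)) = {0, 1} ∨
          ({e 0, e 1} : Finset (Fin 4)) = {2, 3})
    (e' : Equiv.Perm (Fin 4)) :
    V L z e' ≤ V L z e := by
  have hb : blockDecoder (L * ζ) ∈ decoderClass L z :=
    blockDecoder_mem hL.le (mul_pos hL (hδ.trans hδζ)).le fun j k hjk hp =>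
      mul_le_mul_of_nonneg_left (hfar j k hjk (not_or.mp hp).1 (not_or.mp hp).2).le hL.le
  have hlow : 8 * log (Real.sigmoid (L * ζ) / 2) ≤ V L z e := by
    obtain ⟨g, hg, hge⟩ := exists_objective_eq_of_isPair (e' := 1) he (by decide) hb
    rw [← objective_blockDecoder_one, ← hge]
    exact objective_le_V hg e
  refine V_le ⟨_, hb⟩ fun f hf => ?_
  by_cases he' : IsPair (e' 0) (e' 1)
  · obtain ⟨g, hg, hgf⟩ := exists_objective_eq_of_isPair he he' hf
    exact hgf ▸ objective_le_V hg e
  rw [one_div_mul_eq_div, lt_div_iff₀' hL, sigmoid_eq_real_sigmoid] at hδ'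
  calc objective f e' ≤ 4 * (L * δ) - 16 * log 2 :=
        objective_le_of_not_isPair hL.le h01 h23 hf he'
    _ ≤ 8 * log (Real.sigmoid (L * ζ) / 2) := by
        rw [log_div (Real.sigmoid_pos _).ne' two_ne_zero]
        linarith [log_nonneg one_le_two]
    _ ≤ V L z e := hlow

/-- Four-point theorem: under the stated geometry of the latent points and the stated
conditions on `δ`, `ζ`, the denoising objective achieves its largest value at the
pair-preserving encoder matchings. -/
theorem stmt1 {d : ℕ} (L δ ζ : ℝ) (hL : 0 < L) (hδ : 0 < δ) (hδζ : δ < ζ)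
    (z : Fin 4 → EuclideanSpace ℝ (Fin d))
    (h01 : ‖z 0 - z 1‖ < δ) (h23 : ‖z 2 - z 3‖ < δ)
    (hfar : ∀ i j : Fin 4, i ≠ j → ({i, j} : Finset (Fin 4)) ≠ {0, 1} →
      ({i, j} : Finset (Fin 4)) ≠ {2, 3} → ζ < ‖z i - z j‖)
    (hζ : ζ > 1 / L * Real.log (1 / (Real.sqrt 2 - 1)))
    (hδ' : δ < 1 / L * (2 * Real.log (_root_.sigmoid (L * ζ)) + Real.log 2))
    (e : Equiv.Perm (Fin 4))
    (he : ({e 0, e 1} : Finset (Fin 4)) = {0, 1} ∨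
          ({e 0, e 1} : Finset (Fin 4)) = {2, 3})
    (e' : Equiv.Perm (Fin 4)) :
    V L z e' ≤ V L z e :=
  stmt1_general L δ ζ hL hδ hδζ z h01 h23 hfar hδ' e he e'
end

section
/- Let n = 4 with index pairs A = {1,2} and B = {3,4}, let L > 0, δ > 0, and let z_1, z_2, z_3, z_4 ∈ ℝ^d satisfy ‖z_j − z_ℓ‖ < δ for every j ∈ A and ℓ ∈ B (encodings of the two pairs lie close together across pairs). Then every decoder f ∈ 𝒢_L has denoising objective value bounded by ∑_{i∈A} ∑_{j∈A} f i j + ∑_{k∈B} ∑_{ℓ∈B} f k ℓ ≤ 4·L·δ − 12·log 2. -/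
open Real Finset

lemma amgm2 (a b : ℝ) : Real.exp ((a + b) / 2) ≤ (Real.exp a + Real.exp b) / 2 := by
  have h1 : Real.exp a = Real.exp (a / 2) ^ 2 := by
    rw [← Real.exp_nat_mul]; ring_nf
  have h2 : Real.exp b = Real.exp (b / 2) ^ 2 := by
    rw [← Real.exp_nat_mul]; ring_nf
  have h3 : Real.exp ((a + b) / 2) = Real.exp (a / 2) * Real.exp (b / 2) := by
    rw [← Real.exp_add]; ring_nf
  nlinarith [sq_nonneg (Real.exp (a / 2) - Real.exp (b / 2))]

lemma col_bound (w x y s : ℝ)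
    (h : Real.exp w + Real.exp x + Real.exp y + Real.exp s ≤ 1) :
    w + x + y + s ≤ -(8 * Real.log 2) := by
  have h1 := amgm2 w x
  have h2 := amgm2 y s
  have h3 := amgm2 ((w + x) / 2) ((y + s) / 2)
  have h4 : Real.exp ((w + x + y + s) / 4) ≤ 1 / 4 := by
    have : ((w + x) / 2 + (y + s) / 2) / 2 = (w + x + y + s) / 4 := by ring
    rw [this] at h3
    linarith
  have h5 : (w + x + y + s) / 4 ≤ Real.log (1 / 4) := by
    have := Real.log_le_log (Real.exp_pos _) h4
    rwa [Real.log_exp] at this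
  have h6 : Real.log (1 / 4) = -(2 * Real.log 2) := by
    rw [show (1 : ℝ) / 4 = (2 : ℝ) ^ (-2 : ℤ) by norm_num, Real.log_zpow]
    push_cast; ring
  rw [h6] at h5
  linarith

/-- Case 2 of the four-point theorem: if all cross-pair latent distances are below `δ`,
then every decoder `f ∈ 𝒢_L` has denoising objective value at most `4Lδ − 12 log 2`. -/
theorem stmt4 {d : ℕ} (L δ : ℝ) (hL : 0 < L) (hδ : 0 < δ)
    (z : Fin 4 → EuclideanSpace ℝ (Fin d))
    (hclose : ∀ j ∈ ({0, 1} : Finset (Fin 4)), ∀ l ∈ ({2, 3} : Finset (Fin 4)),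
      ‖z j - z l‖ < δ)
    (f : Fin 4 → Fin 4 → ℝ) (hf : f ∈ decoderClass L z) :
    (∑ i ∈ ({0, 1} : Finset (Fin 4)), ∑ j ∈ ({0, 1} : Finset (Fin 4)), f i j) +
      (∑ k ∈ ({2, 3} : Finset (Fin 4)), ∑ l ∈ ({2, 3} : Finset (Fin 4)), f k l) ≤
      4 * L * δ - 12 * Real.log 2 := by
  obtain ⟨hcol, hlip⟩ := hf
  -- column sum bounds
  have S : ∀ j : Fin 4, f 0 j + f 1 j + f 2 j + f 3 j ≤ -(8 * Real.log 2) := by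
    intro j
    have := hcol j
    rw [Fin.sum_univ_four] at this
    exact col_bound _ _ _ _ this
  -- Lipschitz transfer: for j ∈ {0,1}, l ∈ {2,3}, i arbitrary: f i l - L*δ ≤ f i j and vice versa
  have key : ∀ (i : Fin 4) (j l : Fin 4), j ∈ ({0,1} : Finset (Fin 4)) →
      l ∈ ({2,3} : Finset (Fin 4)) → |f i j - f i l| ≤ L * δ := by
    intro i j l hj hl
    have h1 := hlip i j l
    have h2 := hclose j hj l hl
    have : L * ‖z j - z l‖ ≤ L * δ := by
      apply mul_le_mul_of_nonneg_left h2.le hL.le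
    linarith
  have mem0 : (0 : Fin 4) ∈ ({0,1} : Finset (Fin 4)) := by decide
  have mem1 : (1 : Fin 4) ∈ ({0,1} : Finset (Fin 4)) := by decide
  have mem2 : (2 : Fin 4) ∈ ({2,3} : Finset (Fin 4)) := by decide
  have mem3 : (3 : Fin 4) ∈ ({2,3} : Finset (Fin 4)) := by decide
  have k20 := abs_le.mp (key 2 0 2 mem0 mem2)
  have k30 := abs_le.mp (key 3 0 2 mem0 mem2)
  have k21 := abs_le.mp (key 2 1 3 mem1 mem3)
  have k31 := abs_le.mp (key 3 1 3 mem1 mem3)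
  have k02 := abs_le.mp (key 0 0 2 mem0 mem2)
  have k12 := abs_le.mp (key 1 0 2 mem0 mem2)
  have k03 := abs_le.mp (key 0 1 3 mem1 mem3)
  have k13 := abs_le.mp (key 1 1 3 mem1 mem3)
  have S0 := S 0
  have S1 := S 1
  have S2 := S 2
  have S3 := S 3
  have hlog : 0 < Real.log 2 := Real.log_pos (by norm_num)
  have eA : ∀ g : Fin 4 → ℝ, ∑ j ∈ ({0,1} : Finset (Fin 4)), g j = g 0 + g 1 := by
    intro g; rw [Finset.sum_insert (by decide), Finset.sum_singleton]
  have eB : ∀ g : Fin 4 → ℝ, ∑ j ∈ ({2,3} : Finset (Fin 4)), g j = g 2 + g 3 := by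
    intro g; rw [Finset.sum_insert (by decide), Finset.sum_singleton]
  rw [eA, eB, eA (f 0), eA (f 1), eB (f 2), eB (f 3)]
  linarith [k20.1, k20.2, k30.1, k30.2, k21.1, k21.2, k31.1, k31.2,
    k02.1, k02.2, k12.1, k12.2, k03.1, k03.2, k13.1, k13.2]
end

section
/- Let P, Q ∈ [0,1] be real numbers and t ≥ 0. If Q ≤ (1 − P)·exp(t) and P ≤ (1 − Q)·exp(t), then P·Q ≤ σ(t)², where σ(t) = 1/(1 + exp(−t)) is the sigmoid function. Equivalently, in logarithmic form: if 0 < P < 1, 0 < Q < 1, log(1 − P) ≥ log Q − t, and log(1 − Q) ≥ log P − t, then log P + log Q ≤ 2·log σ(t). -/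
open Real

/-!
Adding the two hypotheses gives `P + Q ≤ (2 - (P + Q)) eᵗ`, i.e. `P + Q ≤ 2eᵗ / (1 + eᵗ) = 2σ(t)`,
and AM-GM turns this bound on the sum into `PQ ≤ ((P + Q) / 2)² ≤ σ(t)²`.
-/

lemma sigmoid_eq_exp_div (t : ℝ) : _root_.sigmoid t = exp t / (1 + exp t) := by
  rw [_root_.sigmoid, exp_neg]
  field_simp
  ring

lemma add_le_two_mul_sigmoid {a b t : ℝ} (ha : b ≤ (1 - a) * exp t) (hb : a ≤ (1 - b) * exp t) :
    a + b ≤ 2 * _root_.sigmoid t := by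
  have hsum : (a + b) * (1 + exp t) ≤ 2 * exp t := by linarith
  rw [sigmoid_eq_exp_div, mul_div_assoc', le_div_iff₀ (by positivity)]
  exact hsum

lemma mul_le_sq_of_add_le_two_mul {a b c : ℝ} (ha : 0 ≤ a) (hb : 0 ≤ b) (h : a + b ≤ 2 * c) :
    a * b ≤ c ^ 2 :=
  calc a * b ≤ ((a + b) / 2) ^ 2 := by linarith [four_mul_le_sq_add a b]
    _ ≤ c ^ 2 := pow_le_pow_left₀ (by positivity) (by linarith) 2

theorem stmt5_general (P Q t : ℝ) (hP : P ∈ Set.Icc (0 : ℝ) 1) (hQ : Q ∈ Set.Icc (0 : ℝ) 1)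
    (h1 : Q ≤ (1 - P) * Real.exp t) (h2 : P ≤ (1 - Q) * Real.exp t) :
    P * Q ≤ _root_.sigmoid t ^ 2 :=
  mul_le_sq_of_add_le_two_mul hP.1 hQ.1 (add_le_two_mul_sigmoid h1 h2)

/-- If `P, Q ∈ [0,1]`, `t ≥ 0`, `Q ≤ (1 − P)·exp t` and `P ≤ (1 − Q)·exp t`,
then `P·Q ≤ σ(t)²`. -/
theorem stmt5 (P Q t : ℝ) (hP : P ∈ Set.Icc (0 : ℝ) 1) (hQ : Q ∈ Set.Icc (0 : ℝ) 1)
    (ht : 0 ≤ t) (h1 : Q ≤ (1 - P) * Real.exp t) (h2 : P ≤ (1 - Q) * Real.exp t) :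
    P * Q ≤ _root_.sigmoid t ^ 2 :=
  stmt5_general P Q t hP hQ h1 h2
end

section
/- Let n be a multiple of K ≥ 1, let the indices {1,…,n} be partitioned into clusters of equal size K with cluster labels S_i, let L > 0 and z_1,…,z_n ∈ ℝ^d, and let f ∈ 𝒢_L. Define the within-cluster averaged decoder f′ by f′ i j = log( (1/K) · ∑_{k : S_k = S_i} exp(f k j) ). Then: (a) f′ ∈ 𝒢_L (it satisfies both the sub-probability constraint ∑_i exp(f′ i j) ≤ 1 for every j and the L-Lipschitz constraint |f′ i j − f′ i ℓ| ≤ L·‖z_j − z_ℓ‖); and (b) the within-cluster denoising objective does not decrease: ∑_{j=1}^n ∑_{i : S_i = S_j} f′ i j ≥ ∑_{j=1}^n ∑_{i : S_i = S_j} f i j. Consequently, an optimal decoder may be assumed to assign equal probability to all points within a cluster. -/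
/-!
Within a cluster `C` of size `K`, the averaged decoder is the log-mean-exp
`log ((1/K) ∑_{k ∈ C} exp (f k j))` of the column `f · j` over `C`. Log-mean-exp is monotone and
commutes with adding constants, so it is `L`-Lipschitz in `j` whenever every `f k ·` is; averaging
over fibres preserves column sums, so the sub-probability constraint survives; and Jensen's
inequality for `exp` gives `∑_{k ∈ C} f k j ≤ K · log ((1/K) ∑_{k ∈ C} exp (f k j))`, which is the
claimed increase of the objective.
-/

open Real Finset

lemma sum_inv_card_mul_sum_fiber {α β 𝕜 : Type*} [Fintype α] [DecidableEq β] [Semifield 𝕜]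
    [CharZero 𝕜] (S : α → β) (g : α → 𝕜) :
    ∑ i, (1 / (#(univ.filter (fun k => S k = S i)) : 𝕜)) *
        ∑ k ∈ univ.filter (fun k => S k = S i), g k = ∑ k, g k := by
  set F : α → Finset α := fun i => univ.filter (fun k => S k = S i)
  have mem_F {i k : α} : k ∈ F i ↔ S k = S i := by simp [F]
  have F_eq {i k : α} (hk : k ∈ F i) : F k = F i := by simp [F, mem_F.1 hk]
  calc ∑ i, (1 / (#(F i) : 𝕜)) * ∑ k ∈ F i, g k
      = ∑ i, ∑ k ∈ F i, g k / #(F k) := by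
        refine sum_congr rfl fun i _ => ?_
        rw [mul_sum]
        refine sum_congr rfl fun k hk => ?_
        rw [F_eq hk, one_div_mul_eq_div]
    _ = ∑ k, ∑ i ∈ F k, g k / #(F k) :=
        sum_comm' fun i k => by simp only [mem_univ, true_and, and_true, mem_F, eq_comm]
    _ = ∑ k, g k := by
        refine sum_congr rfl fun k _ => ?_
        have : (#(F k) : 𝕜) ≠ 0 := Nat.cast_ne_zero.2 (card_ne_zero_of_mem (mem_F.2 rfl))
        rw [sum_const, nsmul_eq_mul, mul_div_cancel₀ _ this]

noncomputable def logMeanExp {α : Type*} (s : Finset α) (a : α → ℝ) : ℝ :=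
  log ((1 / (#s : ℝ)) * ∑ k ∈ s, exp (a k))

section LogMeanExp

variable {α : Type*} {s : Finset α} {a b : α → ℝ}

lemma logMeanExp_arg_pos (hs : s.Nonempty) (a : α → ℝ) :
    0 < (1 / (#s : ℝ)) * ∑ k ∈ s, exp (a k) := by
  have : (0 : ℝ) < #s := by exact_mod_cast hs.card_pos
  have := sum_pos (fun k _ => exp_pos (a k)) hs
  positivity

lemma exp_logMeanExp (hs : s.Nonempty) (a : α → ℝ) :
    exp (logMeanExp s a) = (1 / (#s : ℝ)) * ∑ k ∈ s, exp (a k) :=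
  exp_log (logMeanExp_arg_pos hs a)

lemma logMeanExp_mono (hs : s.Nonempty) (h : ∀ k ∈ s, a k ≤ b k) :
    logMeanExp s a ≤ logMeanExp s b := by
  refine log_le_log (logMeanExp_arg_pos hs a) ?_
  gcongr with k hk
  exact h k hk

lemma logMeanExp_add_const (hs : s.Nonempty) (a : α → ℝ) (c : ℝ) :
    logMeanExp s (fun k => a k + c) = logMeanExp s a + c := by
  have hmul : (1 / (#s : ℝ)) * ∑ k ∈ s, exp (a k + c)
      = exp c * ((1 / (#s : ℝ)) * ∑ k ∈ s, exp (a k)) := by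
    simp only [exp_add, ← sum_mul]; ring
  rw [logMeanExp, hmul, log_mul (exp_pos c).ne' (logMeanExp_arg_pos hs a).ne', log_exp,
    logMeanExp, add_comm]

lemma abs_logMeanExp_sub_le (hs : s.Nonempty) {c : ℝ} (h : ∀ k ∈ s, |a k - b k| ≤ c) :
    |logMeanExp s a - logMeanExp s b| ≤ c := by
  have one_side {a b : α → ℝ} (h : ∀ k ∈ s, a k - b k ≤ c) :
      logMeanExp s a ≤ logMeanExp s b + c := by
    rw [← logMeanExp_add_const hs]
    exact logMeanExp_mono hs fun k hk => by linarith [h k hk]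
  rw [abs_sub_le_iff]
  constructor
  · linarith [one_side fun k hk => (abs_le.1 (h k hk)).2]
  · linarith [one_side (a := b) (b := a) fun k hk => by linarith [(abs_le.1 (h k hk)).1]]

/-- Jensen's inequality for `exp`. -/
lemma sum_le_card_mul_logMeanExp (hs : s.Nonempty) (a : α → ℝ) :
    ∑ k ∈ s, a k ≤ #s * logMeanExp s a := by
  have hcard : (0 : ℝ) < #s := by exact_mod_cast hs.card_pos
  have jensen := convexOn_exp.map_sum_le (t := s) (w := fun _ => 1 / (#s : ℝ)) (p := a)
    (fun _ _ => by positivity) (by simp [hcard.ne']) (fun _ _ => Set.mem_univ _)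
  simp only [smul_eq_mul, ← mul_sum] at jensen
  rw [logMeanExp, ← div_le_iff₀' hcard, ← one_div_mul_eq_div]
  exact (le_log_iff_exp_le (logMeanExp_arg_pos hs a)).2 jensen

end LogMeanExp

theorem stmt6_general (n K : ℕ) {ι : Type*}
    [DecidableEq ι] (S : Fin n → ι)
    (hfiber : ∀ c : ι, (Finset.univ.filter (fun i => S i = c)).card = K)
    (d : ℕ) (L : ℝ) (z : Fin n → EuclideanSpace ℝ (Fin d))
    (f : Fin n → Fin n → ℝ) (hf : f ∈ decoderClass L z) :
    let f' : Fin n → Fin n → ℝ := fun i j =>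
      Real.log ((1 / (K : ℝ)) *
        ∑ k ∈ Finset.univ.filter (fun k => S k = S i), Real.exp (f k j))
    f' ∈ decoderClass L z ∧
      ∑ j, ∑ i ∈ Finset.univ.filter (fun i => S i = S j), f' i j ≥
        ∑ j, ∑ i ∈ Finset.univ.filter (fun i => S i = S j), f i j := by
  obtain ⟨hsum, hlip⟩ := hf
  intro f'
  set F : Fin n → Finset (Fin n) := fun i => univ.filter (fun k => S k = S i)
  have mem_F (i : Fin n) : i ∈ F i := by simp [F]
  have hf' (i j : Fin n) : f' i j = logMeanExp (F i) (f · j) := by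
    simp only [f', logMeanExp, F, hfiber]
  refine ⟨⟨fun j => ?_, fun i j l => ?_⟩, sum_le_sum fun j _ => ?_⟩
  · calc ∑ i, exp (f' i j) = ∑ i, (1 / (#(F i) : ℝ)) * ∑ k ∈ F i, exp (f k j) := by
          simp only [hf', exp_logMeanExp ⟨_, mem_F _⟩]
      _ = ∑ k, exp (f k j) := sum_inv_card_mul_sum_fiber S _
      _ ≤ 1 := hsum j
  · rw [hf', hf']
    exact abs_logMeanExp_sub_le ⟨i, mem_F i⟩ fun k _ => hlip k j l
  · have hF (i) (hi : i ∈ F j) : f' i j = logMeanExp (F j) (f · j) := by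
      rw [hf', show F i = F j by simp [F, (mem_filter.1 hi).2]]
    rw [sum_congr rfl hF, sum_const, nsmul_eq_mul]
    exact sum_le_card_mul_logMeanExp ⟨j, mem_F j⟩ _

/-- Within-cluster averaging: given a decoder `f ∈ 𝒢_L` and clusters of equal size `K`,
the averaged decoder `f′ i j = log((1/K) ∑_{k : S_k = S_i} exp (f k j))` also lies in
`𝒢_L` and does not decrease the within-cluster denoising objective. -/
theorem stmt6 (n K : ℕ) (hK : 1 ≤ K) (hnK : K ∣ n) {ι : Type*} [Fintype ι]
    [DecidableEq ι] (S : Fin n → ι)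
    (hfiber : ∀ c : ι, (Finset.univ.filter (fun i => S i = c)).card = K)
    (d : ℕ) (L : ℝ) (hL : 0 < L) (z : Fin n → EuclideanSpace ℝ (Fin d))
    (f : Fin n → Fin n → ℝ) (hf : f ∈ decoderClass L z) :
    let f' : Fin n → Fin n → ℝ := fun i j =>
      Real.log ((1 / (K : ℝ)) *
        ∑ k ∈ Finset.univ.filter (fun k => S k = S i), Real.exp (f k j))
    f' ∈ decoderClass L z ∧
      ∑ j, ∑ i ∈ Finset.univ.filter (fun i => S i = S j), f' i j ≥
        ∑ j, ∑ i ∈ Finset.univ.filter (fun i => S i = S j), f i j :=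
  stmt6_general n K S hfiber d L z f hf
end
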